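/- arXiv:2010.13926 — 2 statements merged into one kernel-verified Lean document; each statement's English description precedes it below -/
import Mathlib

section
/- In one-sided classical linear logic, the scheme A ⅋ B ⊸ A ⊗ B (for all formulas A, B) is interderivable with the binary cut rule BiCut, which derives ⊢ Γ, Δ from premises ⊢ Γ, A, B and ⊢ Δ, A^⊥, B^⊥. -/
/-- Formulas of classical linear logic, extended with exponentials
(`ofc` = !, `whynot` = ?) and coexponentials (`claro` = ¡, `que` = ¿). -/
inductive Formula : Type
  | one | bot | zero | top
  | tensor : Formula → Formula → Formula
  | parr : Formula → Formula → Formula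
  | oplus : Formula → Formula → Formula
  | withF : Formula → Formula → Formula
  | ofc : Formula → Formula
  | whynot : Formula → Formula
  | claro : Formula → Formula
  | que : Formula → Formula
  deriving DecidableEq

/-- De Morgan linear negation. -/
def Formula.dual : Formula → Formula
  | one => bot
  | bot => one
  | zero => top
  | top => zero
  | tensor A B => parr A.dual B.dual
  | parr A B => tensor A.dual B.dual
  | oplus A B => withF A.dual B.dual
  | withF A B => oplus A.dual B.dual
  | ofc A => whynot A.dual
  | whynot A => ofc A.dual
  | claro A => que A.dual
  | que A => claro A.dual

/-- One-sided sequents: multisets of formulas. -/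
abbrev Sequent := Multiset Formula

/-- An extra rule set: a relation between a list of premises and a conclusion. -/
abbrev RuleSet := List Sequent → Sequent → Prop

/-- One-sided sequent calculus for classical linear logic
(multiplicatives and additives), extended by the rules in `R`. -/
inductive Prov (R : RuleSet) : Sequent → Prop
  | ax (A : Formula) : Prov R {A.dual, A}
  | cut {Γ Δ : Sequent} (A : Formula) :
      Prov R (A ::ₘ Γ) → Prov R (A.dual ::ₘ Δ) → Prov R (Γ + Δ)
  | one : Prov R {Formula.one}
  | bot {Γ} : Prov R Γ → Prov R (Formula.bot ::ₘ Γ)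
  | tensor {Γ Δ} {A B} :
      Prov R (A ::ₘ Γ) → Prov R (B ::ₘ Δ) → Prov R (Formula.tensor A B ::ₘ (Γ + Δ))
  | parr {Γ} {A B} :
      Prov R (A ::ₘ B ::ₘ Γ) → Prov R (Formula.parr A B ::ₘ Γ)
  | plusL {Γ} {A B} : Prov R (A ::ₘ Γ) → Prov R (Formula.oplus A B ::ₘ Γ)
  | plusR {Γ} {A B} : Prov R (B ::ₘ Γ) → Prov R (Formula.oplus A B ::ₘ Γ)
  | withR {Γ} {A B} :
      Prov R (A ::ₘ Γ) → Prov R (B ::ₘ Γ) → Prov R (Formula.withF A B ::ₘ Γ)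
  | top {Γ} : Prov R (Formula.top ::ₘ Γ)
  | extra {prems concl} : R prems concl → (∀ S ∈ prems, Prov R S) → Prov R concl

/-- The nullary Mix rule: no premises, empty conclusion. -/
def Mix0 : RuleSet := fun prems concl => prems = [] ∧ concl = 0

/-- The binary Mix rule. -/
def MixRule : RuleSet := fun prems concl => ∃ Γ Δ : Sequent, prems = [Γ, Δ] ∧ concl = Γ + Δ

/-- The binary cut rule. -/
def BiCutRule : RuleSet := fun prems concl =>
  ∃ (Γ Δ : Sequent) (A B : Formula),
    prems = [A ::ₘ B ::ₘ Γ, A.dual ::ₘ B.dual ::ₘ Δ] ∧ concl = Γ + Δ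

/-- The multicut rule. -/
def MultiCutRule : RuleSet := fun prems concl =>
  ∃ (Γ Δ : Sequent) (L : List Formula),
    prems = [Γ + ↑L, Δ + ↑(L.map Formula.dual)] ∧ concl = Γ + Δ

/-- The axiom scheme `A ⅋ B ⊸ A ⊗ B`, i.e. all sequents `⊢ A^⊥ ⊗ B^⊥, A ⊗ B`. -/
def ParrToTensorScheme : RuleSet := fun prems concl =>
  prems = [] ∧ ∃ A B : Formula,
    concl = ({Formula.tensor A.dual B.dual, Formula.tensor A B} : Sequent)

/-- the scheme `A ⅋ B ⊸ A ⊗ B` is interderivable with BiCut: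
every instance of the scheme is derivable in CLL + BiCut, and BiCut is
admissible in CLL + the scheme. -/
theorem parr_imp_tensor_iff_bicut :
    (∀ A B : Formula,
      Prov BiCutRule {Formula.tensor A.dual B.dual, Formula.tensor A B}) ∧
    (∀ (Γ Δ : Sequent) (A B : Formula),
      Prov ParrToTensorScheme (A ::ₘ B ::ₘ Γ) →
      Prov ParrToTensorScheme (A.dual ::ₘ B.dual ::ₘ Δ) →
      Prov ParrToTensorScheme (Γ + Δ)) := by
  have congr : ∀ (R : RuleSet) (Γ Δ : Sequent), Γ = Δ → Prov R Γ → Prov R Δ := by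
    rintro R Γ Δ rfl h; exact h
  constructor
  · intro A B
    -- ⊢ A⊥⊗B⊥, A, B
    have h1 : Prov BiCutRule (A ::ₘ B ::ₘ ({Formula.tensor A.dual B.dual} : Sequent)) := by
      have := Prov.tensor (R := BiCutRule) (Prov.ax A) (Prov.ax B)
      apply congr _ _ _ _ this
      simp [Multiset.singleton_add]
      exact (Multiset.cons_swap _ _ _).trans (congrArg (_ ::ₘ ·) (Multiset.cons_swap _ _ _))
    -- ⊢ A⊗B, A⊥, B⊥
    have h2 : Prov BiCutRule (A.dual ::ₘ B.dual ::ₘ ({Formula.tensor A B} : Sequent)) := by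
      have axA : Prov BiCutRule (A ::ₘ ({A.dual} : Sequent)) :=
        congr _ _ _ (Multiset.cons_swap _ _ _) (Prov.ax A)
      have axB : Prov BiCutRule (B ::ₘ ({B.dual} : Sequent)) :=
        congr _ _ _ (Multiset.cons_swap _ _ _) (Prov.ax B)
      have := Prov.tensor (R := BiCutRule) axA axB
      apply congr _ _ _ _ this
      simp [Multiset.singleton_add]
      exact (Multiset.cons_swap _ _ _).trans (congrArg (_ ::ₘ ·) (Multiset.cons_swap _ _ _))
    have rule : BiCutRule [A ::ₘ B ::ₘ ({Formula.tensor A.dual B.dual} : Sequent),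
        A.dual ::ₘ B.dual ::ₘ ({Formula.tensor A B} : Sequent)]
        (({Formula.tensor A.dual B.dual} : Sequent) + {Formula.tensor A B}) :=
      ⟨_, _, A, B, rfl, rfl⟩
    have := Prov.extra rule (by
      intro S hS
      simp at hS
      rcases hS with h | h <;> subst h
      · exact h1
      · exact h2)
    apply congr _ _ _ _ this
    rfl
  · intro Γ Δ A B hΓ hΔ
    have p1 : Prov ParrToTensorScheme (Formula.parr A B ::ₘ Γ) := Prov.parr hΓ
    have p2 : Prov ParrToTensorScheme (Formula.parr A.dual B.dual ::ₘ Δ) := Prov.parr hΔ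
    have scheme : Prov ParrToTensorScheme
        ({Formula.tensor A.dual B.dual, Formula.tensor A B} : Sequent) :=
      Prov.extra ⟨rfl, A, B, rfl⟩ (by intro S hS; simp at hS)
    have c1 : Prov ParrToTensorScheme (Γ + ({Formula.tensor A B} : Sequent)) :=
      Prov.cut (Formula.parr A B) p1 scheme
    have c1' : Prov ParrToTensorScheme (Formula.tensor A B ::ₘ Γ) := by
      apply congr _ _ _ _ c1
      rw [add_comm]
      rfl
    have : (Formula.tensor A B).dual = Formula.parr A.dual B.dual := rfl
    have c2 : Prov ParrToTensorScheme (Γ + Δ) :=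
      Prov.cut (Formula.tensor A B) c1' (this ▸ p2)
    exact c2
end

section
/- In classical linear logic extended with Mix and BiCut, the (weak) exponentials and coexponentials coincide up to provability: replacing ¿ by ? and ¡ by ! in the coexponential rules yields rules admissible from the exponential rules (with Mix and BiCut), and conversely the exponential rules with ? replaced by ¿ and ! replaced by ¡ are admissible from the coexponential rules (with Mix and BiCut). -/
/-- Tensor-fold of a context with `¿` applied to each formula (empty fold is `1`). -/
def queTensor (L : List Formula) : Formula :=
  (L.map Formula.que).foldr Formula.tensor Formula.one

/-- Tensor-fold of a context with `?` applied to each formula (empty fold is `1`). -/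
def whyTensor (L : List Formula) : Formula :=
  (L.map Formula.whynot).foldr Formula.tensor Formula.one

/-- The (weak) exponential rules: weakening, dereliction, contraction, promotion. -/
def ExpRules : RuleSet := fun p c =>
  (∃ (Γ : Sequent) (A : Formula), p = [Γ] ∧ c = Formula.whynot A ::ₘ Γ) ∨
  (∃ (Γ : Sequent) (A : Formula), p = [A ::ₘ Γ] ∧ c = Formula.whynot A ::ₘ Γ) ∨
  (∃ (Γ : Sequent) (A : Formula),
      p = [Formula.whynot A ::ₘ Formula.whynot A ::ₘ Γ] ∧ c = Formula.whynot A ::ₘ Γ) ∨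
  (∃ (L : List Formula) (A : Formula),
      p = [A ::ₘ ↑(L.map Formula.whynot)] ∧ c = Formula.ofc A ::ₘ ↑(L.map Formula.whynot))

/-- The (weak) coexponential rules: ¿w, ¿d, distributed contraction ¿c,
and copromotion. -/
def CoexpRules : RuleSet := fun p c =>
  (∃ A : Formula, p = [] ∧ c = ({Formula.que A} : Sequent)) ∨
  (∃ (Γ : Sequent) (A : Formula), p = [A ::ₘ Γ] ∧ c = Formula.que A ::ₘ Γ) ∨
  (∃ (Γ Δ : Sequent) (A : Formula),
      p = [Formula.que A ::ₘ Γ, Formula.que A ::ₘ Δ] ∧ c = Formula.que A ::ₘ (Γ + Δ)) ∨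
  (∃ (L : List Formula) (A : Formula),
      p = [({queTensor L, A} : Sequent)] ∧ c = ({queTensor L, Formula.claro A} : Sequent))

/-- Coexponential rules with `¿` replaced by `?` and `¡` replaced by `!`. -/
def CoexpRulesSubst : RuleSet := fun p c =>
  (∃ A : Formula, p = [] ∧ c = ({Formula.whynot A} : Sequent)) ∨
  (∃ (Γ : Sequent) (A : Formula), p = [A ::ₘ Γ] ∧ c = Formula.whynot A ::ₘ Γ) ∨
  (∃ (Γ Δ : Sequent) (A : Formula),
      p = [Formula.whynot A ::ₘ Γ, Formula.whynot A ::ₘ Δ] ∧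
      c = Formula.whynot A ::ₘ (Γ + Δ)) ∨
  (∃ (L : List Formula) (A : Formula),
      p = [({whyTensor L, A} : Sequent)] ∧ c = ({whyTensor L, Formula.ofc A} : Sequent))

/-- Exponential rules with `?` replaced by `¿` and `!` replaced by `¡`. -/
def ExpRulesSubst : RuleSet := fun p c =>
  (∃ (Γ : Sequent) (A : Formula), p = [Γ] ∧ c = Formula.que A ::ₘ Γ) ∨
  (∃ (Γ : Sequent) (A : Formula), p = [A ::ₘ Γ] ∧ c = Formula.que A ::ₘ Γ) ∨
  (∃ (Γ : Sequent) (A : Formula),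
      p = [Formula.que A ::ₘ Formula.que A ::ₘ Γ] ∧ c = Formula.que A ::ₘ Γ) ∨
  (∃ (L : List Formula) (A : Formula),
      p = [A ::ₘ ↑(L.map Formula.que)] ∧ c = Formula.claro A ::ₘ ↑(L.map Formula.que))

/-- CLL with exponentials, Mix and BiCut. -/
def ExpMB : RuleSet := fun p c => ExpRules p c ∨ MixRule p c ∨ BiCutRule p c

/-- CLL with coexponentials, Mix and BiCut. -/
def CoexpMB : RuleSet := fun p c => CoexpRules p c ∨ MixRule p c ∨ BiCutRule p c

/-!
Mix and BiCut make the comma and the tensor interchangeable: BiCut against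
`⊢ A⊥, B⊥, A ⊗ B` turns `⊢ Γ, A, B` into `⊢ Γ, A ⊗ B`, BiCut of `⊢ ⊥, 1` with itself
gives the empty sequent, and with Mix one proves `⊢ (⨂ M)⊥, M` whenever each member
of `M` has an identity sequent, so a cut undoes the folding. Hence the contexts
`⨂¿Γ` of copromotion and `?Γ` of promotion can be traded for one another. For the
structural rules, Mix turns contraction into distributed contraction and weakening
into `⊢ ?A`, while conversely Mix derives weakening from `⊢ ¿A`, and BiCut against
`⊢ ¡A⊥, ¡A⊥, ¿A` (distributed contraction of two axioms) derives contraction.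
-/

def Formula.bigTensor (M : List Formula) : Formula :=
  M.foldr Formula.tensor Formula.one

class HasMix (R : RuleSet) : Prop where
  le : ∀ {p c}, MixRule p c → R p c

class HasBiCut (R : RuleSet) : Prop where
  le : ∀ {p c}, BiCutRule p c → R p c

namespace Prov

variable {R : RuleSet} {Γ Δ : Sequent}

theorem cast {S T : Sequent} (h : S = T) (hS : Prov R S) : Prov R T :=
  h ▸ hS

theorem ax' (A : Formula) : Prov R {A, A.dual} :=
  (ax A).cast (Multiset.cons_swap _ _ _)

theorem extra₀ {c : Sequent} (h : R [] c) : Prov R c :=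
  extra h (by simp)

theorem extra₁ {S c : Sequent} (h : R [S] c) (hS : Prov R S) : Prov R c :=
  extra h (by simpa using hS)

theorem extra₂ {S T c : Sequent} (h : R [S, T] c) (hS : Prov R S) (hT : Prov R T) :
    Prov R c :=
  extra h (by simp [hS, hT])

theorem mix [HasMix R] (hΓ : Prov R Γ) (hΔ : Prov R Δ) : Prov R (Γ + Δ) :=
  extra₂ (HasMix.le ⟨Γ, Δ, rfl, rfl⟩) hΓ hΔ

theorem biCut [HasBiCut R] {A B : Formula} (h₁ : Prov R (A ::ₘ B ::ₘ Γ))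
    (h₂ : Prov R (A.dual ::ₘ B.dual ::ₘ Δ)) : Prov R (Γ + Δ) :=
  extra₂ (HasBiCut.le ⟨Γ, Δ, A, B, rfl, rfl⟩) h₁ h₂

theorem empty [HasBiCut R] : Prov R 0 :=
  biCut (A := Formula.bot) (B := Formula.one) (ax Formula.one) (ax' Formula.one)

theorem tensor' [HasBiCut R] {A B : Formula} (h : Prov R (A ::ₘ B ::ₘ Γ)) :
    Prov R (Formula.tensor A B ::ₘ Γ) := by
  have hId : Prov R (A.dual ::ₘ B.dual ::ₘ {Formula.tensor A B}) :=
    (tensor (ax' A) (ax' B)).cast (by simp only [← Multiset.singleton_add]; abel)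
  exact (biCut h hId).cast (by rw [add_comm, Multiset.singleton_add])

theorem bigTensor_intro [HasMix R] [HasBiCut R] :
    ∀ {M : List Formula} {Δ : Sequent}, Prov R (Δ + ↑M) → Prov R (Formula.bigTensor M ::ₘ Δ)
  | [], Δ, h => (mix one (h.cast (by simp))).cast (Multiset.singleton_add _ _)
  | a :: M, Δ, h => by
      have ih := bigTensor_intro (M := M) (Δ := a ::ₘ Δ)
        (h.cast (by rw [← Multiset.cons_coe, Multiset.add_cons, Multiset.cons_add]))
      exact tensor' (ih.cast (Multiset.cons_swap _ _ _))

theorem bigTensor_dual [HasMix R] [HasBiCut R] :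
    ∀ {M : List Formula}, (∀ m ∈ M, Prov R {m.dual, m}) →
      Prov R ((Formula.bigTensor M).dual ::ₘ ↑M)
  | [], _ => bot empty
  | a :: M, hId => by
      have ih := bigTensor_dual (M := M) fun m hm => hId m (List.mem_cons_of_mem _ hm)
      have hmix : Prov R (a.dual ::ₘ (Formula.bigTensor M).dual ::ₘ a ::ₘ ↑M) :=
        (mix (hId a List.mem_cons_self) ih).cast
          (by simp only [Multiset.insert_eq_cons, ← Multiset.singleton_add]; abel)
      exact parr hmix

theorem bigTensor_elim [HasMix R] [HasBiCut R] {M : List Formula}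
    (hId : ∀ m ∈ M, Prov R {m.dual, m}) (h : Prov R (Formula.bigTensor M ::ₘ Γ)) :
    Prov R (Γ + ↑M) :=
  cut _ h (bigTensor_dual hId)

end Prov

instance : HasMix ExpMB := ⟨fun h => Or.inr (Or.inl h)⟩

instance : HasBiCut ExpMB := ⟨fun h => Or.inr (Or.inr h)⟩

instance : HasMix CoexpMB := ⟨fun h => Or.inr (Or.inl h)⟩

instance : HasBiCut CoexpMB := ⟨fun h => Or.inr (Or.inr h)⟩

open Formula

namespace ExpMB

variable {Γ Δ : Sequent}

theorem weaken (A : Formula) (h : Prov ExpMB Γ) : Prov ExpMB (whynot A ::ₘ Γ) :=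
  Prov.extra₁ (Or.inl (Or.inl ⟨Γ, A, rfl, rfl⟩)) h

theorem derelict {A : Formula} (h : Prov ExpMB (A ::ₘ Γ)) : Prov ExpMB (whynot A ::ₘ Γ) :=
  Prov.extra₁ (Or.inl (Or.inr (Or.inl ⟨Γ, A, rfl, rfl⟩))) h

theorem contract {A : Formula} (h : Prov ExpMB (whynot A ::ₘ whynot A ::ₘ Γ)) :
    Prov ExpMB (whynot A ::ₘ Γ) :=
  Prov.extra₁ (Or.inl (Or.inr (Or.inr (Or.inl ⟨Γ, A, rfl, rfl⟩)))) h

theorem promote {L : List Formula} {A : Formula} (h : Prov ExpMB (A ::ₘ ↑(L.map whynot))) :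
    Prov ExpMB (ofc A ::ₘ ↑(L.map whynot)) :=
  Prov.extra₁ (Or.inl (Or.inr (Or.inr (Or.inr ⟨L, A, rfl, rfl⟩)))) h

theorem whynot_ax (A : Formula) : Prov ExpMB {(whynot A).dual, whynot A} :=
  promote (L := [A]) ((derelict (Prov.ax' A)).cast (Multiset.cons_swap _ _ _))

theorem contract_distrib {A : Formula} (hΓ : Prov ExpMB (whynot A ::ₘ Γ))
    (hΔ : Prov ExpMB (whynot A ::ₘ Δ)) : Prov ExpMB (whynot A ::ₘ (Γ + Δ)) :=
  contract ((Prov.mix hΓ hΔ).cast (by simp only [← Multiset.singleton_add]; abel))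

theorem copromote {L : List Formula} {A : Formula} (h : Prov ExpMB {whyTensor L, A}) :
    Prov ExpMB {whyTensor L, ofc A} := by
  have hId : ∀ m ∈ L.map whynot, Prov ExpMB {m.dual, m} :=
    List.forall_mem_map.2 fun a _ => whynot_ax a
  have hA : Prov ExpMB (A ::ₘ ↑(L.map whynot)) :=
    (Prov.bigTensor_elim hId h).cast (Multiset.singleton_add _ _)
  exact Prov.bigTensor_intro ((promote hA).cast (Multiset.singleton_add _ _).symm)

end ExpMB

namespace CoexpMB

variable {Γ : Sequent}

theorem que_singleton (A : Formula) : Prov CoexpMB {que A} :=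
  Prov.extra₀ (Or.inl (Or.inl ⟨A, rfl, rfl⟩))

theorem derelict {A : Formula} (h : Prov CoexpMB (A ::ₘ Γ)) : Prov CoexpMB (que A ::ₘ Γ) :=
  Prov.extra₁ (Or.inl (Or.inr (Or.inl ⟨Γ, A, rfl, rfl⟩))) h

theorem contract_distrib {Δ : Sequent} {A : Formula} (hΓ : Prov CoexpMB (que A ::ₘ Γ))
    (hΔ : Prov CoexpMB (que A ::ₘ Δ)) : Prov CoexpMB (que A ::ₘ (Γ + Δ)) :=
  Prov.extra₂ (Or.inl (Or.inr (Or.inr (Or.inl ⟨Γ, Δ, A, rfl, rfl⟩)))) hΓ hΔ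

theorem copromote {L : List Formula} {A : Formula} (h : Prov CoexpMB {queTensor L, A}) :
    Prov CoexpMB {queTensor L, claro A} :=
  Prov.extra₁ (Or.inl (Or.inr (Or.inr (Or.inr ⟨L, A, rfl, rfl⟩)))) h

theorem weaken (A : Formula) (h : Prov CoexpMB Γ) : Prov CoexpMB (que A ::ₘ Γ) :=
  Prov.mix (que_singleton A) h

theorem contract {A : Formula} (h : Prov CoexpMB (que A ::ₘ que A ::ₘ Γ)) :
    Prov CoexpMB (que A ::ₘ Γ) := by
  have hId : Prov CoexpMB ((que A).dual ::ₘ (que A).dual ::ₘ {que A}) :=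
    (contract_distrib (A := A) (Prov.ax' _) (Prov.ax' _)).cast
      (by simp only [← Multiset.singleton_add]; abel)
  exact (Prov.biCut h hId).cast (by rw [add_comm, Multiset.singleton_add])

theorem promote {L : List Formula} {A : Formula} (h : Prov CoexpMB (A ::ₘ ↑(L.map que))) :
    Prov CoexpMB (claro A ::ₘ ↑(L.map que)) := by
  have hA : Prov CoexpMB {queTensor L, A} :=
    Prov.bigTensor_intro (h.cast (Multiset.singleton_add _ _).symm)
  exact (Prov.bigTensor_elim (fun m _ => Prov.ax m) (copromote hA)).cast
    (Multiset.singleton_add _ _)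

end CoexpMB

/-- in CLL with Mix and BiCut, (weak) exponentials and
coexponentials coincide up to provability: the coexponential rules with
`¿ ↦ ?`, `¡ ↦ !` are admissible from the exponential rules, and the
exponential rules with `? ↦ ¿`, `! ↦ ¡` are admissible from the
coexponential rules. -/
theorem exp_coexp_coincide_mix_bicut :
    (∀ (p : List Sequent) (c : Sequent),
      CoexpRulesSubst p c → (∀ S ∈ p, Prov ExpMB S) → Prov ExpMB c) ∧
    (∀ (p : List Sequent) (c : Sequent),
      ExpRulesSubst p c → (∀ S ∈ p, Prov CoexpMB S) → Prov CoexpMB c) := by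
  constructor
  · rintro p c (⟨A, rfl, rfl⟩ | ⟨Γ, A, rfl, rfl⟩ | ⟨Γ, Δ, A, rfl, rfl⟩ | ⟨L, A, rfl, rfl⟩) hp
      <;> simp only [List.forall_mem_cons, List.not_mem_nil, IsEmpty.forall_iff,
        implies_true, and_true] at hp
    · exact ExpMB.weaken A Prov.empty
    · exact ExpMB.derelict hp
    · exact ExpMB.contract_distrib hp.1 hp.2
    · exact ExpMB.copromote hp
  · rintro p c (⟨Γ, A, rfl, rfl⟩ | ⟨Γ, A, rfl, rfl⟩ | ⟨Γ, A, rfl, rfl⟩ | ⟨L, A, rfl, rfl⟩) hp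
      <;> simp only [List.forall_mem_cons, List.not_mem_nil, IsEmpty.forall_iff,
        implies_true, and_true] at hp
    · exact CoexpMB.weaken A hp
    · exact CoexpMB.derelict hp
    · exact CoexpMB.contract hp
    · exact CoexpMB.promote hp
end
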